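/- Let V : ℝ^p → ℝ^d be differentiable with derivative map w ↦ DV_w that is L-Lipschitz in the operator norm, and let w₀ ∈ ℝ^p. Suppose σ > 0 satisfies ‖DV_{w₀}ᵀ u‖₂ ≥ σ ‖u‖₂ for all u ∈ ℝ^d. Then for every w with ‖w − w₀‖₂ ≤ σ/(2L) one has ‖DV_wᵀ u‖₂ ≥ (σ/2) ‖u‖₂ for all u ∈ ℝ^d; in particular uᵀ (DV_w DV_wᵀ) u ≥ (σ²/4) ‖u‖₂² for all u, and DV_w DV_wᵀ is invertible. -/

import Mathlib

open Matrix
open scoped BigOperators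

/-- The Euclidean norm on ℝ^n. -/
noncomputable def eNorm {n : ℕ} (v : Fin n → ℝ) : ℝ := Real.sqrt (∑ i, v i ^ 2)

/-- The operator norm of a d×p real matrix, induced by the Euclidean norms. -/
noncomputable def matOpNorm {d p : ℕ} (A : Matrix (Fin d) (Fin p) ℝ) : ℝ :=
  ‖LinearMap.toContinuousLinearMap (Matrix.toEuclideanLin A)‖

open scoped Matrix.Norms.L2Operator in
lemma matOpNorm_eq_l2 {d p : ℕ} (A : Matrix (Fin d) (Fin p) ℝ) : matOpNorm A = ‖A‖ := rfl

lemma eNorm_eq {n : ℕ} (v : Fin n → ℝ) :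
    eNorm v = ‖(EuclideanSpace.equiv (Fin n) ℝ).symm v‖ := by
  rw [eNorm, EuclideanSpace.norm_eq]
  congr 1
  refine Finset.sum_congr rfl fun i _ => ?_
  rw [Real.norm_eq_abs, sq_abs]
  rfl

lemma eNorm_nonneg {n : ℕ} (v : Fin n → ℝ) : 0 ≤ eNorm v := Real.sqrt_nonneg _

lemma eNorm_mulVec_le {d p : ℕ} (A : Matrix (Fin d) (Fin p) ℝ) (x : Fin p → ℝ) :
    eNorm (A *ᵥ x) ≤ matOpNorm A * eNorm x := by
  open scoped Matrix.Norms.L2Operator in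
  rw [eNorm_eq, eNorm_eq, matOpNorm_eq_l2]
  exact A.l2_opNorm_mulVec _

lemma matOpNorm_transpose {d p : ℕ} (A : Matrix (Fin d) (Fin p) ℝ) :
    matOpNorm Aᵀ = matOpNorm A := by
  open scoped Matrix.Norms.L2Operator in
  rw [matOpNorm_eq_l2, matOpNorm_eq_l2]
  have : Aᵀ = Aᴴ := by ext i j; simp [conjTranspose_apply]
  rw [this]
  exact A.l2_opNorm_conjTranspose

lemma eNorm_triangle {n : ℕ} (a b : Fin n → ℝ) : eNorm (a + b) ≤ eNorm a + eNorm b := by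
  rw [eNorm_eq, eNorm_eq, eNorm_eq]
  exact norm_add_le _ _

lemma eNorm_neg {n : ℕ} (a : Fin n → ℝ) : eNorm (-a) = eNorm a := by
  rw [eNorm_eq, eNorm_eq]; exact norm_neg _

/-- If DV is L-Lipschitz and DV_{w₀}ᵀ has singular values bounded below by σ > 0,
then for every w with ‖w − w₀‖₂ ≤ σ/(2L), DV_wᵀ has singular values bounded below
by σ/2; in particular DV_w DV_wᵀ ⪰ (σ²/4) I and DV_w DV_wᵀ is invertible. -/
theorem lower_singular_value_stable
    {d p : ℕ}
    (V : (Fin p → ℝ) → (Fin d → ℝ))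
    (DV : (Fin p → ℝ) → Matrix (Fin d) (Fin p) ℝ)
    (hV : ∀ w, HasFDerivAt V (LinearMap.toContinuousLinearMap (Matrix.mulVecLin (DV w))) w)
    (L : ℝ) (hL : 0 < L)
    (hLip : ∀ w w', matOpNorm (DV w - DV w') ≤ L * eNorm (w - w'))
    (w₀ : Fin p → ℝ)
    (σ : ℝ) (hσ : 0 < σ)
    (hσmin : ∀ u : Fin d → ℝ, σ * eNorm u ≤ eNorm ((DV w₀)ᵀ.mulVec u))
    (w : Fin p → ℝ) (hw : eNorm (w - w₀) ≤ σ / (2 * L)) :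
    (∀ u : Fin d → ℝ, (σ / 2) * eNorm u ≤ eNorm ((DV w)ᵀ.mulVec u)) ∧
    (∀ u : Fin d → ℝ, (σ ^ 2 / 4) * eNorm u ^ 2 ≤ u ⬝ᵥ (DV w * (DV w)ᵀ).mulVec u) ∧
    IsUnit (DV w * (DV w)ᵀ) := by
  have h1 : ∀ u : Fin d → ℝ, (σ / 2) * eNorm u ≤ eNorm ((DV w)ᵀ.mulVec u) := by
    intro u
    have hsplit : (DV w₀)ᵀ.mulVec u = (DV w)ᵀ.mulVec u + (DV w₀ - DV w)ᵀ.mulVec u := by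
      have : DV w₀ = DV w + (DV w₀ - DV w) := by abel
      rw [← Matrix.add_mulVec, ← Matrix.transpose_add, ← this]
    have htri : eNorm ((DV w₀)ᵀ.mulVec u)
        ≤ eNorm ((DV w)ᵀ.mulVec u) + eNorm ((DV w₀ - DV w)ᵀ.mulVec u) := by
      rw [hsplit]; exact eNorm_triangle _ _
    have hop : eNorm ((DV w₀ - DV w)ᵀ.mulVec u) ≤ (σ / 2) * eNorm u := by
      calc eNorm ((DV w₀ - DV w)ᵀ.mulVec u)
          ≤ matOpNorm (DV w₀ - DV w)ᵀ * eNorm u := eNorm_mulVec_le _ _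
        _ = matOpNorm (DV w₀ - DV w) * eNorm u := by rw [matOpNorm_transpose]
        _ ≤ (L * eNorm (w₀ - w)) * eNorm u := by
            exact mul_le_mul_of_nonneg_right (hLip w₀ w) (eNorm_nonneg u)
        _ = (L * eNorm (w - w₀)) * eNorm u := by
            rw [← eNorm_neg (w₀ - w), neg_sub]
        _ ≤ (L * (σ / (2 * L))) * eNorm u := by
            refine mul_le_mul_of_nonneg_right ?_ (eNorm_nonneg u)
            exact mul_le_mul_of_nonneg_left hw hL.le
        _ = (σ / 2) * eNorm u := by field_simp
    have := hσmin u
    nlinarith [eNorm_nonneg ((DV w)ᵀ.mulVec u), eNorm_nonneg u]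
  have h2 : ∀ u : Fin d → ℝ, (σ ^ 2 / 4) * eNorm u ^ 2 ≤ u ⬝ᵥ (DV w * (DV w)ᵀ).mulVec u := by
    intro u
    have hrw : u ⬝ᵥ (DV w * (DV w)ᵀ).mulVec u
        = ((DV w)ᵀ.mulVec u) ⬝ᵥ ((DV w)ᵀ.mulVec u) := by
      rw [← Matrix.mulVec_mulVec, Matrix.dotProduct_mulVec, ← Matrix.mulVec_transpose]
    have hsq : ((DV w)ᵀ.mulVec u) ⬝ᵥ ((DV w)ᵀ.mulVec u) = eNorm ((DV w)ᵀ.mulVec u) ^ 2 := by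
      rw [eNorm, Real.sq_sqrt (by positivity)]
      simp [dotProduct, sq]
    rw [hrw, hsq]
    calc (σ ^ 2 / 4) * eNorm u ^ 2 = ((σ / 2) * eNorm u) ^ 2 := by ring
      _ ≤ eNorm ((DV w)ᵀ.mulVec u) ^ 2 :=
          pow_le_pow_left₀ (mul_nonneg (by linarith) (eNorm_nonneg u)) (h1 u) 2
  refine ⟨h1, h2, ?_⟩
  have hpd : (DV w * (DV w)ᵀ).PosDef := by
    refine Matrix.PosDef.of_dotProduct_mulVec_pos ?_ ?_
    · have : (DV w)ᵀ = (DV w)ᴴ := by ext i j; simp [Matrix.conjTranspose_apply]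
      rw [this]
      exact Matrix.isHermitian_mul_conjTranspose_self _
    · intro x hx
      have hxpos : 0 < eNorm x := by
        rw [eNorm]
        refine Real.sqrt_pos.mpr ?_
        obtain ⟨i, hi⟩ := Function.ne_iff.mp hx
        exact Finset.sum_pos' (fun j _ => sq_nonneg _)
          ⟨i, Finset.mem_univ i, (sq_nonneg _).lt_of_ne (Ne.symm (pow_ne_zero 2 hi))⟩
      have := h2 x
      simp only [star_trivial]
      calc (0 : ℝ) < (σ ^ 2 / 4) * eNorm x ^ 2 := by positivity
        _ ≤ _ := this
  exact hpd.isUnit
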